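/- For any sampling distribution R, the matrices I − M̂_R and M̂_R − (2M̂ − I) are positive semidefinite, where M̂ = Σ_r E_r ∘ E_r is the standard average mixing matrix. -/

import Mathlib

open Matrix MeasureTheory
open scoped Matrix

/-! The spectral idempotents `E r` are symmetric and idempotent, hence positive semidefinite,
and by the Schur product theorem so is every `E r ⊙ E s`. Taking the Hadamard square of
`∑ r, E r = 1` gives `1 = M̂ + 2 ∑_{s<r} E r ⊙ E s`, so `1 - M̂_R` and `M̂_R - (2 M̂ - 1)` are the
sums of the `E r ⊙ E s` (`s < r`) with weights `2 - 2 E[cos]` and `2 + 2 E[cos]`, both nonnegative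
because `|E[cos]| ≤ 1`. -/

/-- The average mixing matrix under a sampling distribution `μ`, expressed via the
(real) spectral idempotents `E r` of the adjacency matrix with eigenvalues `θ r`:
`M̂_R = ∑ r, E r ∘ E r + 2 ∑_{s<r} E[cos ((θ r - θ s) R)] • (E r ∘ E s)`. -/
noncomputable def ammR {n d : ℕ} (θ : Fin d → ℝ)
    (E : Fin d → Matrix (Fin n) (Fin n) ℝ) (μ : Measure ℝ) : Matrix (Fin n) (Fin n) ℝ :=
  (∑ r, E r ⊙ E r) +
    ∑ r, ∑ s ∈ Finset.univ.filter (· < r),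
      (2 * ∫ t, Real.cos ((θ r - θ s) * t) ∂μ) • (E r ⊙ E s)

theorem Finset.sum_sum_eq_sum_diag_add_sum_lt {α M : Type*} [Fintype α] [LinearOrder α]
    [AddCommMonoid M] (f : α → α → M) :
    ∑ r, ∑ s, f r s = ∑ r, f r r + ∑ r, ∑ s ∈ univ.filter (· < r), (f r s + f s r) := by
  have hsplit : ∀ r, ∑ s, f r s = f r r + ∑ s ∈ univ.filter (· < r), f r s
      + ∑ s ∈ univ.filter (r < ·), f r s := by
    intro r
    rw [← sum_filter_add_sum_filter_not univ (· < r)]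
    have : univ.filter (fun s ↦ ¬ s < r) = insert r (univ.filter (r < ·)) := by
      ext s; simp [le_iff_eq_or_lt, eq_comm]
    rw [this, sum_insert (by simp)]
    abel
  have hswap : ∑ r, ∑ s ∈ univ.filter (r < ·), f r s = ∑ r, ∑ s ∈ univ.filter (· < r), f s r :=
    sum_comm' (by intro x y; simp)
  simp only [hsplit, sum_add_distrib, hswap]
  abel

namespace Matrix

variable {ι α : Type*}

theorem PosSemidef.of_isSymm_of_mul_self_eq [Fintype ι] {P : Matrix ι ι ℝ} (hsymm : P.IsSymm)
    (hidem : P * P = P) : P.PosSemidef := by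
  simpa [conjTranspose_eq_transpose_of_trivial, hsymm.eq, hidem] using
    posSemidef_conjTranspose_mul_self P

theorem sum_hadamard_sum {β R : Type*} [NonUnitalNonAssocSemiring R] (s : Finset α)
    (t : Finset β) (A : α → Matrix ι ι R) (B : β → Matrix ι ι R) :
    (∑ r ∈ s, A r) ⊙ (∑ q ∈ t, B q) = ∑ r ∈ s, ∑ q ∈ t, A r ⊙ B q := by
  ext i j
  simp only [hadamard_apply, sum_apply, Finset.sum_mul_sum]

theorem one_sub_sum_hadamard_self_eq [DecidableEq ι] [Fintype α] [LinearOrder α]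
    {E : α → Matrix ι ι ℝ} (hsum : ∑ r, E r = 1) :
    1 - ∑ r, E r ⊙ E r = ∑ r, ∑ s ∈ Finset.univ.filter (· < r), (2 : ℝ) • (E r ⊙ E s) := by
  have hone : (1 : Matrix ι ι ℝ) = ∑ r, ∑ s, E r ⊙ E s := by
    rw [← sum_hadamard_sum, hsum, one_hadamard, diag_one]
    exact diagonal_one.symm
  simp only [hone, Finset.sum_sum_eq_sum_diag_add_sum_lt, hadamard_comm (E _) (E _), two_smul,
    add_sub_cancel_left]

theorem posSemidef_sum_lt_smul_hadamard [Fintype ι] [Fintype α] [LinearOrder α]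
    {E : α → Matrix ι ι ℝ} (hE : ∀ r, (E r).PosSemidef) {w : α → α → ℝ} (hw : ∀ r s, 0 ≤ w r s) :
    (∑ r, ∑ s ∈ Finset.univ.filter (· < r), w r s • (E r ⊙ E s)).PosSemidef :=
  posSemidef_sum _ fun r _ ↦ posSemidef_sum _ fun s _ ↦ ((hE r).hadamard (hE s)).smul (hw r s)

end Matrix

theorem abs_integral_cos_mul_le_one (μ : Measure ℝ) [IsProbabilityMeasure μ] (a : ℝ) :
    |∫ t, Real.cos (a * t) ∂μ| ≤ 1 := by
  simpa using norm_integral_le_of_norm_le_const (μ := μ) (C := 1)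
    (.of_forall fun t ↦ (Real.norm_eq_abs _).trans_le (Real.abs_cos_le_one (a * t)))

theorem averageMixingMatrix_posSemidef_bounds_general {n d : ℕ}
    (θ : Fin d → ℝ) (E : Fin d → Matrix (Fin n) (Fin n) ℝ)
    (hEsym : ∀ r, (E r).IsSymm)
    (horth : ∀ r s, E r * E s = if r = s then E r else 0)
    (hsum : ∑ r, E r = 1)
    (μ : Measure ℝ) [IsProbabilityMeasure μ] :
    (1 - ammR θ E μ).PosSemidef ∧
      (ammR θ E μ - ((2 : ℝ) • (∑ r, E r ⊙ E r) - 1)).PosSemidef := by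
  set c : Fin d → Fin d → ℝ := fun r s ↦ ∫ t, Real.cos ((θ r - θ s) * t) ∂μ
  have hE : ∀ r, (E r).PosSemidef := fun r ↦
    .of_isSymm_of_mul_self_eq (hEsym r) (by simpa using horth r r)
  have hc : ∀ r s, |c r s| ≤ 1 := fun r s ↦ abs_integral_cos_mul_le_one μ _
  have hoff := one_sub_sum_hadamard_self_eq hsum
  have hdiag : ammR θ E μ - ∑ r, E r ⊙ E r
      = ∑ r, ∑ s ∈ Finset.univ.filter (· < r), (2 * c r s) • (E r ⊙ E s) :=
    add_sub_cancel_left _ _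
  constructor
  · rw [show 1 - ammR θ E μ = (1 - ∑ r, E r ⊙ E r) - (ammR θ E μ - ∑ r, E r ⊙ E r) by abel,
      hoff, hdiag]
    simp only [← Finset.sum_sub_distrib, ← sub_smul]
    exact posSemidef_sum_lt_smul_hadamard hE fun r s ↦ by linarith [(abs_le.mp (hc r s)).2]
  · rw [show ammR θ E μ - ((2 : ℝ) • (∑ r, E r ⊙ E r) - 1)
        = (1 - ∑ r, E r ⊙ E r) + (ammR θ E μ - ∑ r, E r ⊙ E r) by rw [two_smul]; abel,
      hoff, hdiag]
    simp only [← Finset.sum_add_distrib, ← add_smul]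
    exact posSemidef_sum_lt_smul_hadamard hE fun r s ↦ by linarith [(abs_le.mp (hc r s)).1]

/-- for any sampling distribution `R`, both `I - M̂_R` and
`M̂_R - (2 M̂ - I)` are positive semidefinite, where `M̂ = ∑ r, E r ∘ E r` is the
standard average mixing matrix. -/
theorem averageMixingMatrix_posSemidef_bounds {n d : ℕ}
    (θ : Fin d → ℝ) (E : Fin d → Matrix (Fin n) (Fin n) ℝ)
    (hθ : Function.Injective θ)
    (hEsym : ∀ r, (E r).IsSymm)
    (horth : ∀ r s, E r * E s = if r = s then E r else 0)
    (hsum : ∑ r, E r = 1)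
    (μ : Measure ℝ) [IsProbabilityMeasure μ] :
    (1 - ammR θ E μ).PosSemidef ∧
      (ammR θ E μ - ((2 : ℝ) • (∑ r, E r ⊙ E r) - 1)).PosSemidef :=
  averageMixingMatrix_posSemidef_bounds_general θ E hEsym horth hsum μ
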